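/- In the stationary n-step setting, the variance of the sample mean of the generator satisfies Var_θ[g^n(X^{n+1})/n] = φ''(θ)/n + O(n^{−3/2}); in particular n·Var_θ[g^n(X^{n+1})/n] → φ''(θ) as n → ∞. -/

import Mathlib

open Matrix Real

/-- A (column-)transition matrix: nonnegative entries, each column sums to 1. -/
def IsTransition {X : Type*} [Fintype X] (W : Matrix X X ℝ) : Prop :=
  (∀ x x', 0 ≤ W x x') ∧ ∀ x', ∑ x, W x x' = 1

/-- Irreducibility: some power has a positive entry for every pair. -/
def IsIrred {X : Type*} [Fintype X] [DecidableEq X] (W : Matrix X X ℝ) : Prop :=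
  ∀ x x', ∃ n : ℕ, 0 < (W ^ n) x x'

/-- `r` is the Perron–Frobenius eigenvalue of `M`: it is positive and has a
strictly positive (right) eigenvector. For irreducible nonnegative matrices this
characterizes the Perron–Frobenius eigenvalue uniquely. -/
def IsPerron {X : Type*} [Fintype X] (M : Matrix X X ℝ) (r : ℝ) : Prop :=
  0 < r ∧ ∃ v : X → ℝ, (∀ x, 0 < v x) ∧ M *ᵥ v = r • v


/-- The tilted matrix `W̄_θ(x|x') = W(x|x')·e^{θ g(x,x')}`. -/
noncomputable def tilted {X : Type*} [Fintype X] (W : Matrix X X ℝ) (g : X → X → ℝ) (θ : ℝ) :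
    Matrix X X ℝ :=
  Matrix.of fun x x' => W x x' * Real.exp (θ * g x x')

/-- The exponential family of transition matrices
`W_θ(x|x') = λ_θ⁻¹ · v_θ(x) · W̄_θ(x|x') · v_θ(x')⁻¹`, with `λ_θ = e^{φ(θ)}` the
Perron–Frobenius eigenvalue and `v_θ` the Perron eigenvector of `W̄_θᵀ`. -/
noncomputable def expFam {X : Type*} [Fintype X] (W : Matrix X X ℝ) (g : X → X → ℝ)
    (φ : ℝ → ℝ) (v : ℝ → X → ℝ) (θ : ℝ) : Matrix X X ℝ :=
  Matrix.of fun x x' =>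
    (Real.exp (φ θ))⁻¹ * v θ x * (W x x' * Real.exp (θ * g x x')) * (v θ x')⁻¹

/-- `φ` and `v` constitute the Perron data of the family of tilted matrices:
`v_θ` is a positive eigenvector of `W̄_θᵀ` with eigenvalue `e^{φ(θ)}`. -/
def IsPerronData {X : Type*} [Fintype X] (W : Matrix X X ℝ) (g : X → X → ℝ)
    (φ : ℝ → ℝ) (v : ℝ → X → ℝ) : Prop :=
  ∀ θ : ℝ, (∀ x, 0 < v θ x) ∧ (tilted W g θ)ᵀ *ᵥ v θ = Real.exp (φ θ) • v θ

/-- `P` is a stationary distribution of the transition matrix `M`. -/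
def IsStationaryDistr {X : Type*} [Fintype X] (M : Matrix X X ℝ) (P : X → ℝ) : Prop :=
  (∀ x, 0 ≤ P x) ∧ (∑ x, P x = 1) ∧ M *ᵥ P = P

/-- The distribution of a Markov chain of length `n+1` with transition matrix `M`
and initial distribution `P`: `x₁ ∼ P` and each step governed by `M`. -/
noncomputable def chainDist {X : Type*} [Fintype X] (M : Matrix X X ℝ) (P : X → ℝ)
    (n : ℕ) (x : Fin (n + 1) → X) : ℝ :=
  (∏ i : Fin n, M (x i.succ) (x i.castSucc)) * P (x 0)
/-- The additive functional `g^n(x^{n+1}) = Σ_{k=1}^n g(x_{k+1},x_k)`. -/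
def addFun {X : Type*} (g : X → X → ℝ) (n : ℕ) (x : Fin (n + 1) → X) : ℝ :=
  ∑ i : Fin n, g (x i.succ) (x i.castSucc)

/-- The variance of `g^n` under the stationary chain distribution. -/
noncomputable def chainVar {X : Type*} [Fintype X] (M : Matrix X X ℝ) (P : X → ℝ)
    (g : X → X → ℝ) (n : ℕ) : ℝ :=
  (∑ x : Fin (n + 1) → X, chainDist M P n x * (addFun g n x) ^ 2)
    - (∑ x : Fin (n + 1) → X, chainDist M P n x * addFun g n x) ^ 2

/-
Let `h_θ = ∂_θ log v_θ` and let `r_θ(x, x') = g(x, x') - φ'(θ) + h_θ(x) - h_θ(x')`, which is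
`∂_θ log W_θ(x|x')`. Differentiating the column sums `∑ₓ W_θ(x|x') = 1` shows that `r_θ` has
conditional mean zero, so `g^n = Mₙ + h_θ(X₁) - h_θ(X_{n+1}) + n φ'(θ)` where `Mₙ = r_θ^n` is a
martingale with variance exactly `n σ²`, `σ² = E[r_θ(X₂, X₁)²]`. The bounded boundary term moves the
variance by `O(√n)` (Young's inequality with weight `1/√n` for the cross term).

It remains to identify `σ²` with `φ''(θ)`. Stationary means of coboundaries vanish and
`E_t[r_t] = 0`, so `φ'(t) - φ'(θ) = E_t[r_θ]` for every `t`. The stationary distribution is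
differentiable in `t` by Cramer's rule, since `W_t - 1 + J` is invertible for irreducible `W_t`,
and the derivative of `E_t[r_θ]` at `t = θ` is `E_θ[r_θ²]`: the term coming from the derivative of
the stationary distribution is killed by the zero conditional mean of `r_θ`.
-/

open Filter Topology

theorem Fin.sum_succ_sub_castSucc {G : Type*} [AddCommGroup G] {n : ℕ} (f : Fin (n + 1) → G) :
    ∑ i : Fin n, (f i.succ - f i.castSucc) = f (Fin.last n) - f 0 := by
  induction n with
  | zero => simp
  | succ n ih =>
    rw [Fin.sum_univ_castSucc]
    simp only [Fin.succ_castSucc, ih fun i => f i.castSucc, Fin.succ_last, Fin.castSucc_zero]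
    abel

theorem Fintype.sum_pi_fin_succ_eq_sum_snoc {X β : Type*} [Fintype X] [AddCommMonoid β] {n : ℕ}
    (F : (Fin (n + 2) → X) → β) :
    ∑ z, F z = ∑ x : Fin (n + 1) → X, ∑ y, F (Fin.snoc x y) := by
  rw [← (Fin.snocEquiv fun _ => X).sum_comp, Fintype.sum_prod_type, Finset.sum_comm]
  rfl

theorem Matrix.det_smul_eq_cramer {ι R : Type*} [Fintype ι] [DecidableEq ι] [CommRing R]
    {A : Matrix ι ι R} {x b : ι → R} (h : A *ᵥ x = b) : A.det • x = A.cramer b := by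
  rw [cramer_eq_adjugate_mulVec, ← h, mulVec_mulVec, adjugate_mul, smul_mulVec, one_mulVec]

theorem differentiableAt_det {𝕜 ι : Type*} [NontriviallyNormedField 𝕜] [Fintype ι]
    [DecidableEq ι] {A : 𝕜 → Matrix ι ι 𝕜} {t : 𝕜}
    (hA : ∀ i j, DifferentiableAt 𝕜 (fun s => A s i j) t) :
    DifferentiableAt 𝕜 (fun s => (A s).det) t := by
  simp only [det_apply']
  exact .fun_sum fun σ _ => (DifferentiableAt.fun_finsetProd fun i _ => hA _ _).const_mul _

theorem abs_two_mul_mul_le {s : ℝ} (hs : 0 < s) (a b : ℝ) :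
    |2 * (a * b)| ≤ s * a ^ 2 + s⁻¹ * b ^ 2 := by
  have hsub : s * a ^ 2 + s⁻¹ * b ^ 2 - 2 * (a * b) = s⁻¹ * (s * a - b) ^ 2 := by
    field_simp; ring
  have hadd : s * a ^ 2 + s⁻¹ * b ^ 2 + 2 * (a * b) = s⁻¹ * (s * a + b) ^ 2 := by
    field_simp; ring
  have := inv_nonneg.2 hs.le
  rw [abs_le]
  constructor <;> nlinarith [mul_nonneg this (sq_nonneg (s * a - b)),
    mul_nonneg this (sq_nonneg (s * a + b))]

theorem abs_sum_mul_le_of_abs_le {ι : Type*} [Fintype ι] {p f : ι → ℝ} {b : ℝ}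
    (hp0 : ∀ i, 0 ≤ p i) (hp1 : ∑ i, p i = 1) (hf : ∀ i, |f i| ≤ b) : |∑ i, p i * f i| ≤ b := calc
  |∑ i, p i * f i| ≤ ∑ i, p i * b := by
    refine (Finset.abs_sum_le_sum_abs _ _).trans (Finset.sum_le_sum fun i _ => ?_)
    rw [abs_mul, abs_of_nonneg (hp0 i)]
    exact mul_le_mul_of_nonneg_left (hf i) (hp0 i)
  _ = b := by rw [← Finset.sum_mul, hp1, one_mul]

theorem abs_variance_add_sub_le {ι : Type*} [Fintype ι] {p A B : ι → ℝ} {b s : ℝ} (c : ℝ)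
    (hp0 : ∀ i, 0 ≤ p i) (hp1 : ∑ i, p i = 1) (hA : ∑ i, p i * A i = 0)
    (hB : ∀ i, |B i| ≤ b) (hs : 0 < s) :
    |(∑ i, p i * (A i + B i + c) ^ 2 - (∑ i, p i * (A i + B i + c)) ^ 2) - ∑ i, p i * A i ^ 2|
      ≤ s * ∑ i, p i * A i ^ 2 + (s⁻¹ + 1) * b ^ 2 := by
  have hmean : ∑ i, p i * (A i + B i + c) = ∑ i, p i * B i + c := by
    simp only [mul_add, Finset.sum_add_distrib, ← Finset.sum_mul, hA, hp1]
    ring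
  have hsecond : ∑ i, p i * (A i + B i + c) ^ 2 = ∑ i, p i * A i ^ 2
      + ∑ i, p i * (2 * (A i * B i)) + ∑ i, p i * B i ^ 2 + 2 * c * ∑ i, p i * B i + c ^ 2 := by
    have hexp : ∀ i, p i * (A i + B i + c) ^ 2 = p i * A i ^ 2 + p i * (2 * (A i * B i))
        + p i * B i ^ 2 + 2 * c * (p i * B i) + c ^ 2 * p i + 2 * c * (p i * A i) :=
      fun i => by ring
    simp only [hexp, Finset.sum_add_distrib, ← Finset.mul_sum, hA, hp1]
    ring
  have hB2 : ∀ i, |B i ^ 2| ≤ b ^ 2 := fun i => by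
    rw [abs_sq]; exact sq_le_sq' (abs_le.1 (hB i)).1 (abs_le.1 (hB i)).2
  have hEB := abs_sum_mul_le_of_abs_le hp0 hp1 hB
  have hEB2 := (le_abs_self _).trans (abs_sum_mul_le_of_abs_le hp0 hp1 hB2)
  have hcross : |∑ i, p i * (2 * (A i * B i))| ≤ s * ∑ i, p i * A i ^ 2 + s⁻¹ * b ^ 2 := calc
    |∑ i, p i * (2 * (A i * B i))| ≤ ∑ i, p i * (s * A i ^ 2 + s⁻¹ * B i ^ 2) := by
      refine (Finset.abs_sum_le_sum_abs _ _).trans (Finset.sum_le_sum fun i _ => ?_)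
      rw [abs_mul, abs_of_nonneg (hp0 i)]
      exact mul_le_mul_of_nonneg_left (abs_two_mul_mul_le hs _ _) (hp0 i)
    _ = s * ∑ i, p i * A i ^ 2 + s⁻¹ * ∑ i, p i * B i ^ 2 := by
      simp only [mul_add, Finset.sum_add_distrib, Finset.mul_sum, mul_left_comm (p _)]
    _ ≤ s * ∑ i, p i * A i ^ 2 + s⁻¹ * b ^ 2 := by gcongr
  have hvarB : |∑ i, p i * B i ^ 2 - (∑ i, p i * B i) ^ 2| ≤ b ^ 2 :=
    abs_sub_le_of_nonneg_of_le (Finset.sum_nonneg fun i _ => mul_nonneg (hp0 i) (sq_nonneg _))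
      hEB2 (sq_nonneg _) (sq_le_sq' (abs_le.1 hEB).1 (abs_le.1 hEB).2)
  rw [hsecond, hmean]
  calc _ = |∑ i, p i * (2 * (A i * B i)) + (∑ i, p i * B i ^ 2 - (∑ i, p i * B i) ^ 2)| := by
        ring_nf
    _ ≤ _ := (abs_add_le _ _).trans (by linarith)

theorem tendsto_of_abs_sub_le_div_sqrt {u : ℕ → ℝ} {l C : ℝ}
    (h : ∀ n : ℕ, 1 ≤ n → |u n - l| ≤ C / √n) : Tendsto u atTop (𝓝 l) := by
  have hC : Tendsto (fun n : ℕ => C / √n) atTop (𝓝 0) :=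
    tendsto_const_nhds.div_atTop (Real.tendsto_sqrt_atTop.comp tendsto_natCast_atTop_atTop)
  refine tendsto_iff_norm_sub_tendsto_zero.2
    (squeeze_zero' (.of_forall fun _ => norm_nonneg _) ?_ hC)
  filter_upwards [eventually_ge_atTop 1] with n hn using h n hn

theorem addFun_snoc {X : Type*} (g : X → X → ℝ) {n : ℕ} (x : Fin (n + 1) → X) (y : X) :
    addFun g (n + 1) (Fin.snoc x y) = addFun g n x + g y (x (Fin.last n)) := by
  simp only [addFun, Fin.sum_univ_castSucc, Fin.succ_castSucc, Fin.snoc_castSucc,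
    Fin.succ_last, Fin.snoc_last]

theorem addFun_eq_of_eq_add_coboundary {X : Type*} {g r : X → X → ℝ} {h : X → ℝ} {μ : ℝ}
    (hg : ∀ x x', g x x' = r x x' + μ + h x' - h x) (n : ℕ) (z : Fin (n + 1) → X) :
    addFun g n z = addFun r n z + (h (z 0) - h (z (Fin.last n))) + n * μ := by
  have htel := Fin.sum_succ_sub_castSucc fun i => h (z i)
  simp only [addFun, hg, Finset.sum_add_distrib, Finset.sum_sub_distrib, Finset.sum_const,
    Finset.card_univ, Fintype.card_fin, nsmul_eq_mul] at htel ⊢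
  linarith

noncomputable def stepMean {X : Type*} [Fintype X] (M : Matrix X X ℝ) (P : X → ℝ)
    (F : X → X → ℝ) : ℝ :=
  ∑ x', P x' * ∑ x, M x x' * F x x'

section Chain

variable {X : Type*} [Fintype X] {M : Matrix X X ℝ} {P : X → ℝ} {r : X → X → ℝ}

theorem sum_mul_sum_mul_eq_sum_mulVec_mul (M : Matrix X X ℝ) (P f : X → ℝ) :
    ∑ x', P x' * ∑ x, M x x' * f x = ∑ x, (M *ᵥ P) x * f x := by
  simp only [mulVec, dotProduct, Finset.mul_sum, Finset.sum_mul]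
  rw [Finset.sum_comm]
  exact Finset.sum_congr rfl fun _ _ => Finset.sum_congr rfl fun _ _ => by ring

theorem chainDist_snoc (M : Matrix X X ℝ) (P : X → ℝ) {n : ℕ} (x : Fin (n + 1) → X) (y : X) :
    chainDist M P (n + 1) (Fin.snoc x y) = M y (x (Fin.last n)) * chainDist M P n x := by
  simp only [chainDist, Fin.prod_univ_castSucc, Fin.succ_castSucc, Fin.snoc_castSucc,
    Fin.succ_last, Fin.snoc_last]
  rw [← Fin.castSucc_zero, Fin.snoc_castSucc]
  ring

theorem chainDist_nonneg (hM : ∀ x x', 0 ≤ M x x') (hP : ∀ x, 0 ≤ P x) {n : ℕ}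
    (z : Fin (n + 1) → X) : 0 ≤ chainDist M P n z :=
  mul_nonneg (Finset.prod_nonneg fun _ _ => hM _ _) (hP _)

theorem sum_chainDist_mul_snoc (M : Matrix X X ℝ) (P : X → ℝ) {n : ℕ}
    (F : (Fin (n + 2) → X) → ℝ) :
    ∑ z, chainDist M P (n + 1) z * F z
      = ∑ x, chainDist M P n x * ∑ y, M y (x (Fin.last n)) * F (Fin.snoc x y) := by
  rw [Fintype.sum_pi_fin_succ_eq_sum_snoc]
  refine Finset.sum_congr rfl fun x _ => ?_
  rw [Finset.mul_sum]
  exact Finset.sum_congr rfl fun y _ => by rw [chainDist_snoc]; ring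

theorem sum_chainDist_mul_last (hP : M *ᵥ P = P) (n : ℕ) (f : X → ℝ) :
    ∑ z, chainDist M P n z * f (z (Fin.last n)) = ∑ x, P x * f x := by
  induction n generalizing f with
  | zero =>
    simp only [chainDist, Finset.univ_eq_empty, Finset.prod_empty, one_mul, Fin.last_zero]
    exact ((Equiv.funUnique (Fin 1) X).symm.sum_comp fun z => P (z 0) * f (z 0)).symm
  | succ n ih =>
    simp only [sum_chainDist_mul_snoc, Fin.snoc_last]
    rw [ih fun x => ∑ y, M y x * f y, sum_mul_sum_mul_eq_sum_mulVec_mul, hP]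

theorem sum_chainDist (hP : M *ᵥ P = P) (hP1 : ∑ x, P x = 1) (n : ℕ) :
    ∑ z, chainDist M P n z = 1 := by
  simpa [hP1] using sum_chainDist_mul_last hP n 1

theorem sum_chainDist_mul_addFun (hM : ∀ x', ∑ x, M x x' = 1)
    (hr : ∀ x', ∑ x, M x x' * r x x' = 0) (n : ℕ) :
    ∑ z, chainDist M P n z * addFun r n z = 0 := by
  induction n with
  | zero => simp [addFun]
  | succ n ih =>
    have step : ∀ (a : X) (c : ℝ), ∑ y, M y a * (c + r y a) = c := fun a c => by
      simp only [mul_add, Finset.sum_add_distrib, ← Finset.sum_mul, hM, hr, one_mul, add_zero]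
    simp only [sum_chainDist_mul_snoc, addFun_snoc, step, ih]

theorem sum_chainDist_mul_addFun_sq (hM : ∀ x', ∑ x, M x x' = 1) (hP : M *ᵥ P = P)
    (hr : ∀ x', ∑ x, M x x' * r x x' = 0) (n : ℕ) :
    ∑ z, chainDist M P n z * addFun r n z ^ 2 = n * stepMean M P fun x x' => r x x' ^ 2 := by
  induction n with
  | zero => simp [addFun]
  | succ n ih =>
    have step : ∀ (a : X) (c : ℝ),
        ∑ y, M y a * (c + r y a) ^ 2 = c ^ 2 + ∑ y, M y a * r y a ^ 2 := fun a c => by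
      have hexp : ∀ y, M y a * (c + r y a) ^ 2
          = c ^ 2 * M y a + 2 * c * (M y a * r y a) + M y a * r y a ^ 2 := fun y => by ring
      simp only [hexp, Finset.sum_add_distrib, ← Finset.mul_sum, hM, hr]
      ring
    simp only [sum_chainDist_mul_snoc, addFun_snoc, step, mul_add, Finset.sum_add_distrib, ih,
      sum_chainDist_mul_last hP n fun a => ∑ y, M y a * r y a ^ 2]
    simp only [stepMean]
    push_cast
    ring

theorem abs_chainVar_div_sub_le {g : X → X → ℝ} {h : X → ℝ} {μ b : ℝ} (hM : IsTransition M)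
    (hP : IsStationaryDistr M P)
    (hr : ∀ x', ∑ x, M x x' * r x x' = 0) (hg : ∀ x x', g x x' = r x x' + μ + h x' - h x)
    (hh : ∀ x, |h x| ≤ b) {n : ℕ} (hn : 1 ≤ n) :
    |chainVar M P g n / n - stepMean M P (fun x x' => r x x' ^ 2)|
      ≤ (stepMean M P (fun x x' => r x x' ^ 2) + 8 * b ^ 2) / √n := by
  obtain ⟨hP0, hP1, hMP⟩ := hP
  set σ := stepMean M P fun x x' => r x x' ^ 2
  have hn1 : (1 : ℝ) ≤ n := by exact_mod_cast hn
  have hq1 : 1 ≤ √(n : ℝ) := Real.one_le_sqrt.2 hn1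
  have hqq : √(n : ℝ) ^ 2 = n := Real.sq_sqrt (by positivity)
  have hB : ∀ z : Fin (n + 1) → X, |h (z 0) - h (z (Fin.last n))| ≤ 2 * b := fun z =>
    (abs_sub _ _).trans (by linarith [hh (z 0), hh (z (Fin.last n))])
  have hvar := abs_variance_add_sub_le (n * μ) (chainDist_nonneg hM.1 hP0) (sum_chainDist hMP hP1 n)
    (sum_chainDist_mul_addFun hM.2 hr n) hB (inv_pos.2 (by positivity : 0 < √(n : ℝ)))
  simp only [← addFun_eq_of_eq_add_coboundary hg, sum_chainDist_mul_addFun_sq hM.2 hMP hr,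
    inv_inv] at hvar
  have hlead : (√(n : ℝ))⁻¹ * (n * σ) = √n * σ := by
    rw [← mul_assoc, inv_mul_eq_div, Real.div_sqrt]
  have hbound : |chainVar M P g n - n * σ| ≤ √n * (σ + 8 * b ^ 2) := by
    refine hvar.trans ?_
    rw [hlead]
    nlinarith [sq_nonneg b]
  have hn0 : (0 : ℝ) < n := by positivity
  calc |chainVar M P g n / n - σ| = |(chainVar M P g n - n * σ) / n| := by
        rw [sub_div, mul_div_cancel_left₀ _ hn0.ne']
    _ = |chainVar M P g n - n * σ| / n := by rw [abs_div, abs_of_pos hn0]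
    _ ≤ √n * (σ + 8 * b ^ 2) / n := by gcongr
    _ = (σ + 8 * b ^ 2) / √n := by
        rw [div_eq_div_iff hn0.ne' (by positivity)]
        linear_combination (σ + 8 * b ^ 2) * hqq

theorem stepMean_sub_add_sub (hM : ∀ x', ∑ x, M x x' = 1)
    (hP : IsStationaryDistr M P) (F : X → X → ℝ) (μ : ℝ) (h : X → ℝ) :
    stepMean M P (fun x x' => F x x' - μ + h x - h x') = stepMean M P F - μ := by
  obtain ⟨-, hP1, hMP⟩ := hP
  have hrow : ∀ x', ∑ x, M x x' * (F x x' - μ + h x - h x')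
      = ∑ x, M x x' * F x x' - μ + ∑ x, M x x' * h x - h x' := fun x' => by
    simp only [mul_add, mul_sub, Finset.sum_add_distrib, Finset.sum_sub_distrib, ← Finset.sum_mul,
      hM, one_mul]
  have hcob := sum_mul_sum_mul_eq_sum_mulVec_mul M P h
  rw [hMP] at hcob
  simp only [stepMean, hrow]
  simp only [mul_add, mul_sub, Finset.sum_add_distrib, Finset.sum_sub_distrib, ← Finset.sum_mul,
    hP1, hcob]
  ring

end Chain

theorem hasDerivAt_stepMean {X : Type*} [Fintype X] {M : ℝ → Matrix X X ℝ} {M' : Matrix X X ℝ}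
    {P : ℝ → X → ℝ} {P' : X → ℝ} {θ : ℝ} (hM : ∀ x x', HasDerivAt (fun t => M t x x') (M' x x') θ)
    (hP : ∀ x, HasDerivAt (fun t => P t x) (P' x) θ) (F : X → X → ℝ) :
    HasDerivAt (fun t => stepMean (M t) (P t) F) (stepMean M' (P θ) F + stepMean (M θ) P' F) θ := by
  have H := HasDerivAt.fun_sum fun x' (_ : x' ∈ Finset.univ) => (hP x').fun_mul
    (HasDerivAt.fun_sum fun x (_ : x ∈ Finset.univ) => (hM x x').mul_const (F x x'))
  refine H.congr_deriv ?_
  simp only [stepMean, ← Finset.sum_add_distrib]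
  exact Finset.sum_congr rfl fun _ _ => by ring

section Irreducible

variable {X : Type*} [Fintype X] [DecidableEq X] {M : Matrix X X ℝ} {P : X → ℝ}

theorem const_pow_mul_pow_apply_le {A B : Matrix X X ℝ} {c : ℝ} (hc : 0 ≤ c)
    (hB : ∀ x x', 0 ≤ B x x') (hBA : ∀ x x', c * B x x' ≤ A x x') (n : ℕ) (x x' : X) :
    c ^ n * (B ^ n) x x' ≤ (A ^ n) x x' := by
  have hA : ∀ x x', 0 ≤ A x x' := fun x x' => (mul_nonneg hc (hB x x')).trans (hBA x x')
  induction n generalizing x' with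
  | zero => simp
  | succ n ih =>
    rw [pow_succ c, pow_succ B, pow_succ A, mul_apply, mul_apply, Finset.mul_sum]
    refine Finset.sum_le_sum fun y _ => ?_
    calc c ^ n * c * ((B ^ n) x y * B y x') = (c ^ n * (B ^ n) x y) * (c * B y x') := by ring
      _ ≤ (A ^ n) x y * A y x' :=
        mul_le_mul (ih y) (hBA y x') (mul_nonneg hc (hB y x')) (pow_apply_nonneg hA n x y)

theorem IsIrred.of_const_mul_le {A B : Matrix X X ℝ} {c : ℝ} (hB : IsIrred B) (hc : 0 < c)
    (hB0 : ∀ x x', 0 ≤ B x x') (hBA : ∀ x x', c * B x x' ≤ A x x') : IsIrred A := fun x x' =>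
  let ⟨n, hn⟩ := hB x x'
  ⟨n, (mul_pos (pow_pos hc n) hn).trans_le (const_pow_mul_pow_apply_le hc.le hB0 hBA n x x')⟩

theorem pos_of_mulVec_eq_self (hM : ∀ x x', 0 ≤ M x x') (hirr : IsIrred M) {z : X → ℝ}
    (hz : M *ᵥ z = z) (hz0 : ∀ x, 0 ≤ z x) {x₁ : X} (hx₁ : 0 < z x₁) (x : X) : 0 < z x := by
  have hpow : ∀ k : ℕ, (M ^ k) *ᵥ z = z := fun k => by
    induction k with
    | zero => simp
    | succ k ih => rw [pow_succ, ← mulVec_mulVec, hz, ih]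
  obtain ⟨n, hn⟩ := hirr x x₁
  calc 0 < (M ^ n) x x₁ * z x₁ := mul_pos hn hx₁
    _ ≤ ∑ y, (M ^ n) x y * z y :=
      Finset.single_le_sum (fun y _ => mul_nonneg (pow_apply_nonneg hM n x y) (hz0 y))
        (Finset.mem_univ x₁)
    _ = z x := congrFun (hpow n) x

theorem eq_sum_smul_of_mulVec_eq_self (hM : ∀ x x', 0 ≤ M x x') (hirr : IsIrred M)
    (hP : IsStationaryDistr M P) {u : X → ℝ} (hu : M *ᵥ u = u) : u = (∑ x, u x) • P := by
  obtain ⟨hP0, hP1, hMP⟩ := hP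
  obtain ⟨x₁, -, hx₁⟩ := Finset.exists_lt_of_sum_lt (f := 0) (s := Finset.univ) (g := P)
    (by simp [hP1])
  have hPpos := pos_of_mulVec_eq_self hM hirr hMP hP0 hx₁
  have : Nonempty X := ⟨x₁⟩
  obtain ⟨x₀, hx₀⟩ := Finite.exists_max fun x => u x / P x
  set c := u x₀ / P x₀
  have hw0 : ∀ x, 0 ≤ (c • P - u) x := fun x => by
    have := (div_le_iff₀ (hPpos x)).1 (hx₀ x)
    simp only [Pi.sub_apply, Pi.smul_apply, smul_eq_mul]
    linarith
  have hw : M *ᵥ (c • P - u) = c • P - u := by rw [mulVec_sub, mulVec_smul, hMP, hu]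
  have hwx₀ : (c • P - u) x₀ = 0 := by
    simp [c, div_mul_cancel₀ _ (hPpos x₀).ne']
  have hu' : u = c • P := by
    refine (sub_eq_zero.1 (funext fun y => ?_)).symm
    by_contra hy
    exact (pos_of_mulVec_eq_self hM hirr hw hw0 ((hw0 y).lt_of_ne' hy) x₀).ne' hwx₀
  rw [hu']
  simp [← Finset.mul_sum, hP1]

def stationarySystem (M : Matrix X X ℝ) : Matrix X X ℝ :=
  M - 1 + of fun _ _ => 1

theorem stationarySystem_mulVec (M : Matrix X X ℝ) (u : X → ℝ) :
    stationarySystem M *ᵥ u = M *ᵥ u - u + fun _ => ∑ x, u x := by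
  have hJ : (of fun _ _ => 1 : Matrix X X ℝ) *ᵥ u = fun _ => ∑ x, u x := by
    ext; simp [mulVec, dotProduct]
  rw [stationarySystem, add_mulVec, sub_mulVec, one_mulVec, hJ]

theorem stationarySystem_mulVec_eq_one (hP : IsStationaryDistr M P) :
    stationarySystem M *ᵥ P = fun _ => 1 := by
  rw [stationarySystem_mulVec, hP.2.2, sub_self, zero_add, hP.2.1]

theorem det_stationarySystem_ne_zero (hM : IsTransition M) (hirr : IsIrred M)
    (hP : IsStationaryDistr M P) : (stationarySystem M).det ≠ 0 := by
  rw [Ne, ← exists_mulVec_eq_zero_iff]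
  rintro ⟨u, hu0, hu⟩
  rw [stationarySystem_mulVec] at hu
  have hcol : ∑ x, (M *ᵥ u) x = ∑ x, u x := by
    simpa [hM.2] using (sum_mul_sum_mul_eq_sum_mulVec_mul M u 1).symm
  have hsum : ∑ x, u x = 0 := by
    have := congrArg (fun w => ∑ x, w x) hu
    simp only [Pi.add_apply, Pi.sub_apply, Finset.sum_add_distrib, Finset.sum_sub_distrib, hcol,
      sub_self, zero_add, Finset.sum_const, Finset.card_univ, nsmul_eq_mul, Pi.zero_apply,
      mul_zero] at this
    have hX : (0 : ℝ) < Fintype.card X := by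
      obtain ⟨x, -⟩ := Function.ne_iff.1 hu0
      exact_mod_cast Fintype.card_pos_iff.2 ⟨x⟩
    exact (mul_eq_zero.1 this).resolve_left hX.ne'
  have hfix : M *ᵥ u = u := by
    rwa [hsum, ← Pi.zero_def, add_zero, sub_eq_zero] at hu
  exact hu0 (by rw [eq_sum_smul_of_mulVec_eq_self hM.1 hirr hP hfix, hsum, zero_smul])

end Irreducible

theorem differentiableAt_stationaryDistr {X : Type*} [Fintype X] [DecidableEq X]
    {M : ℝ → Matrix X X ℝ} {P : ℝ → X → ℝ} (hM : ∀ t, IsTransition (M t))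
    (hirr : ∀ t, IsIrred (M t)) (hP : ∀ t, IsStationaryDistr (M t) (P t)) {θ : ℝ}
    (hMθ : ∀ x x', DifferentiableAt ℝ (fun t => M t x x') θ) (x : X) :
    DifferentiableAt ℝ (fun t => P t x) θ := by
  have hdet t := det_stationarySystem_ne_zero (hM t) (hirr t) (hP t)
  have hcramer : (fun t => P t x)
      = fun t => (stationarySystem (M t)).cramer (fun _ => 1) x / (stationarySystem (M t)).det :=
    funext fun t => by
      rw [eq_div_iff (hdet t), mul_comm, ← smul_eq_mul, ← Pi.smul_apply,
        det_smul_eq_cramer (stationarySystem_mulVec_eq_one (hP t))]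
  have hS : ∀ i j, DifferentiableAt ℝ (fun t => stationarySystem (M t) i j) θ := fun i j => by
    simp only [stationarySystem, Matrix.add_apply, Matrix.sub_apply, of_apply]
    exact ((hMθ i j).sub_const _).add_const _
  rw [hcramer]
  refine .div ?_ (differentiableAt_det hS) (hdet θ)
  simp only [cramer_apply]
  refine differentiableAt_det fun i j => ?_
  by_cases hj : j = x
  · simp [hj]
  · simpa [hj] using hS i j

/-- The score `∂_θ log W_θ(x|x')`, see `hasDerivAt_expFam`. -/
noncomputable def expFamScore {X : Type*} (g : X → X → ℝ) (φ : ℝ → ℝ) (v : ℝ → X → ℝ) (θ : ℝ)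
    (x x' : X) : ℝ :=
  g x x' - deriv φ θ + logDeriv (fun t => v t x) θ - logDeriv (fun t => v t x') θ

section ExpFam

variable {X : Type*} [Fintype X] {W : Matrix X X ℝ} {g : X → X → ℝ} {φ : ℝ → ℝ}
  {v : ℝ → X → ℝ}

theorem sum_tilted_mul_eq (hPD : IsPerronData W g φ v) (t : ℝ) (x' : X) :
    ∑ x, W x x' * exp (t * g x x') * v t x = exp (φ t) * v t x' := by
  simpa [tilted, mulVec, dotProduct, mul_comm, mul_left_comm] using congrFun (hPD t).2 x'

theorem sum_expFam_apply (hPD : IsPerronData W g φ v) (t : ℝ) (x' : X) :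
    ∑ x, expFam W g φ v t x x' = 1 := by
  have hv := ((hPD t).1 x').ne'
  have hrow : ∀ x, expFam W g φ v t x x'
      = (exp (φ t) * v t x')⁻¹ * (W x x' * exp (t * g x x') * v t x) := fun x => by
    simp only [expFam, of_apply]; field_simp
  rw [Finset.sum_congr rfl fun x _ => hrow x, ← Finset.mul_sum, sum_tilted_mul_eq hPD,
    inv_mul_cancel₀ (by positivity)]

theorem isTransition_expFam (hW : ∀ x x', 0 ≤ W x x') (hPD : IsPerronData W g φ v) (t : ℝ) :
    IsTransition (expFam W g φ v t) := by
  refine ⟨fun x x' => ?_, sum_expFam_apply hPD t⟩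
  have := (hPD t).1 x
  have := (hPD t).1 x'
  have := hW x x'
  simp only [expFam, of_apply]
  positivity

theorem isIrred_expFam [DecidableEq X] (hW : ∀ x x', 0 ≤ W x x') (hirr : IsIrred W)
    (hPD : IsPerronData W g φ v) (t : ℝ) : IsIrred (expFam W g φ v t) := by
  cases isEmpty_or_nonempty X
  · exact fun x => isEmptyElim x
  set f : X × X → ℝ := fun p => (exp (φ t))⁻¹ * v t p.1 * exp (t * g p.1 p.2) * (v t p.2)⁻¹
  have hf : ∀ p, 0 < f p := fun p => by
    have := (hPD t).1 p.1
    have := (hPD t).1 p.2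
    positivity
  obtain ⟨p₀, hp₀⟩ := Finite.exists_min f
  refine hirr.of_const_mul_le (hf p₀) hW fun x x' => ?_
  have : expFam W g φ v t x x' = f (x, x') * W x x' := by
    simp only [expFam, of_apply, f]
    ring
  rw [this]
  exact mul_le_mul_of_nonneg_right (hp₀ (x, x')) (hW x x')

theorem hasDerivAt_expFam (hPD : IsPerronData W g φ v) {θ : ℝ} (hφ : DifferentiableAt ℝ φ θ)
    (hv : ∀ x, DifferentiableAt ℝ (fun t => v t x) θ) (x x' : X) :
    HasDerivAt (fun t => expFam W g φ v t x x')
      (expFam W g φ v θ x x' * expFamScore g φ v θ x x') θ := by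
  have hvx := ((hPD θ).1 x).ne'
  have hvx' := ((hPD θ).1 x').ne'
  have H := (((hφ.hasDerivAt.exp.inv (exp_pos _).ne').fun_mul (hv x).hasDerivAt).fun_mul
    (((hasDerivAt_mul_const (g x x')).exp).const_mul (W x x'))).fun_mul
    ((hv x').hasDerivAt.inv hvx')
  refine (H : HasDerivAt (fun t => expFam W g φ v t x x') _ θ).congr_deriv ?_
  simp only [expFam, of_apply, expFamScore, logDeriv_apply, Pi.inv_apply]
  field_simp
  ring

theorem sum_expFam_mul_expFamScore (hPD : IsPerronData W g φ v) {θ : ℝ}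
    (hφ : DifferentiableAt ℝ φ θ) (hv : ∀ x, DifferentiableAt ℝ (fun t => v t x) θ) (x' : X) :
    ∑ x, expFam W g φ v θ x x' * expFamScore g φ v θ x x' = 0 := by
  have H := HasDerivAt.fun_sum fun x (_ : x ∈ Finset.univ) => hasDerivAt_expFam hPD hφ hv x x'
  simp only [sum_expFam_apply hPD] at H
  exact H.unique (hasDerivAt_const θ 1)

theorem stepMean_expFam_expFamScore {P : X → ℝ} (hPD : IsPerronData W g φ v) {t : ℝ}
    (hφ : DifferentiableAt ℝ φ t) (hv : ∀ x, DifferentiableAt ℝ (fun s => v s x) t)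
    (hP : IsStationaryDistr (expFam W g φ v t) P) (θ : ℝ) :
    stepMean (expFam W g φ v t) P (expFamScore g φ v θ) = deriv φ t - deriv φ θ := by
  have hM := sum_expFam_apply hPD t
  have hmean : stepMean (expFam W g φ v t) P g = deriv φ t := by
    have h := stepMean_sub_add_sub hM hP g (deriv φ t) fun x => logDeriv (fun s => v s x) t
    have h0 : stepMean (expFam W g φ v t) P (expFamScore g φ v t) = 0 := by
      simp [stepMean, sum_expFam_mul_expFamScore hPD hφ hv]
    unfold expFamScore at h0
    linarith
  unfold expFamScore
  rw [stepMean_sub_add_sub hM hP, hmean]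

theorem deriv_deriv_eq_stepMean_expFamScore_sq (hPD : IsPerronData W g φ v)
    (hφ : Differentiable ℝ φ) (hv : ∀ x, Differentiable ℝ fun t => v t x) {P : ℝ → X → ℝ}
    (hP : ∀ t, IsStationaryDistr (expFam W g φ v t) (P t)) {θ : ℝ}
    (hPθ : ∀ x, DifferentiableAt ℝ (fun t => P t x) θ) :
    deriv (deriv φ) θ
      = stepMean (expFam W g φ v θ) (P θ) fun x x' => expFamScore g φ v θ x x' ^ 2 := by
  have hφ' : deriv φ
      = fun t => deriv φ θ + stepMean (expFam W g φ v t) (P t) (expFamScore g φ v θ) :=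
    funext fun t => by
      rw [stepMean_expFam_expFamScore hPD (hφ t) (fun x => hv x t) (hP t)]
      ring
  have H := hasDerivAt_stepMean (fun x x' => hasDerivAt_expFam hPD (hφ θ) (fun x => hv x θ) x x')
    (fun x => (hPθ x).hasDerivAt) (expFamScore g φ v θ)
  rw [hφ', (H.const_add _).deriv]
  simp only [stepMean, sum_expFam_mul_expFamScore hPD (hφ θ) (fun x => hv x θ), mul_zero,
    Finset.sum_const_zero, add_zero, mul_assoc, sq]

end ExpFam

/-- `Var_θ[g^n(X^{n+1})/n] = φ''(θ)/n + O(n^{-3/2})`; equivalently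
`|Var_θ[S_n]/n - φ''(θ)| ≤ C/√n`, and in particular
`n·Var_θ[g^n(X^{n+1})/n] = Var_θ[S_n]/n → φ''(θ)`. -/
theorem chain_variance_asymptotics {X : Type*} [Fintype X] [DecidableEq X]
    (W : Matrix X X ℝ) (g : X → X → ℝ)
    (hW : IsTransition W) (hirr : IsIrred W)
    (φ : ℝ → ℝ) (v : ℝ → X → ℝ) (hPD : IsPerronData W g φ v)
    (P1 : ℝ → X → ℝ) (hstat : ∀ θ : ℝ, IsStationaryDistr (expFam W g φ v θ) (P1 θ))
    (hφsmooth : ContDiff ℝ 2 φ)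
    (hvdiff : ∀ x, Differentiable ℝ (fun t => v t x))
    (θ : ℝ) :
    (∃ C : ℝ, ∀ n : ℕ, 1 ≤ n →
      |chainVar (expFam W g φ v θ) (P1 θ) g n / n - deriv (deriv φ) θ|
        ≤ C / Real.sqrt n)
    ∧ Filter.Tendsto (fun n : ℕ => chainVar (expFam W g φ v θ) (P1 θ) g n / n)
        Filter.atTop (nhds (deriv (deriv φ) θ)) := by
  have hφ : Differentiable ℝ φ := hφsmooth.differentiable (by norm_num)
  have hP1 : ∀ x, DifferentiableAt ℝ (fun t => P1 t x) θ :=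
    differentiableAt_stationaryDistr (isTransition_expFam hW.1 hPD) (isIrred_expFam hW.1 hirr hPD)
      hstat fun x x' => (hasDerivAt_expFam hPD (hφ θ) (fun x => hvdiff x θ) x x').differentiableAt
  obtain ⟨b, hb⟩ := Finite.exists_le fun x => |logDeriv (fun t => v t x) θ|
  have hbound : ∀ n : ℕ, 1 ≤ n → |chainVar (expFam W g φ v θ) (P1 θ) g n / n - deriv (deriv φ) θ|
      ≤ _ / √n := fun n hn => by
    rw [deriv_deriv_eq_stepMean_expFamScore_sq hPD hφ hvdiff hstat hP1]
    exact abs_chainVar_div_sub_le (isTransition_expFam hW.1 hPD θ) (hstat θ)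
      (sum_expFam_mul_expFamScore hPD (hφ θ) fun x => hvdiff x θ)
      (fun x x' => by unfold expFamScore; ring) hb hn
  exact ⟨⟨_, hbound⟩, tendsto_of_abs_sub_le_div_sqrt hbound⟩
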